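/- Let q > 0 and let π(dx) = (e^{-a₊x/2}/x^{1-q})(𝓘(x/(2b₊), p₊) + max(p₊,0)) dx restricted to (0,1). Assuming 𝓘(x,p) = 1/(2√(πx)) + (1-2p)/4 + O(√x) as x→0⁺, the integral ∫_0^1 x^{q} · (e^{-a₊x/2}/x)(𝓘(x/(2b₊),p₊) + max(p₊,0)) dx is finite if and only if q > 1/2. Consequently the Blumenthal–Getoor index of the GIG₊ (and BGIG) Lévy process equals 1/2. -/

import Mathlib

open MeasureTheory Real Filter Set Asymptotics
open scoped Topology

/-- Bessel function of the first kind (Schläfli integral representation, valid for `x > 0`). -/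
noncomputable def besselJ (ν x : ℝ) : ℝ :=
  (∫ τ in Set.Ioc (0:ℝ) Real.pi, Real.cos (ν * τ - x * Real.sin τ)) / Real.pi
    - Real.sin (ν * Real.pi) / Real.pi
        * ∫ t in Set.Ioi (0:ℝ), Real.exp (-x * Real.sinh t - ν * t)

/-- Bessel function of the second kind (integral representation, valid for `x > 0`). -/
noncomputable def besselY (ν x : ℝ) : ℝ :=
  (∫ τ in Set.Ioc (0:ℝ) Real.pi, Real.sin (x * Real.sin τ - ν * τ)) / Real.pi
    - (∫ t in Set.Ioi (0:ℝ),
        (Real.exp (ν * t) + Real.cos (ν * Real.pi) * Real.exp (-ν * t))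
          * Real.exp (-x * Real.sinh t)) / Real.pi

/-- Squared modulus of the Hankel function of the first kind:
`|H_ν(x)|² = J_ν(x)² + Y_ν(x)²`. -/
noncomputable def hankelNormSq (ν x : ℝ) : ℝ := besselJ ν x ^ 2 + besselY ν x ^ 2

/-- The Jaeger integral `𝓘(x,p) = (2/π²) ∫_0^∞ e^{-x y²} / (y |H_p(y)|²) dy`. -/
noncomputable def jaeger (x p : ℝ) : ℝ :=
  2 / Real.pi ^ 2 * ∫ y in Set.Ioi (0:ℝ), Real.exp (-x * y ^ 2) / (y * hankelNormSq p y)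

/-! Near `0⁺` the assumed expansion makes `𝓘(u,p) + c` asymptotic to `u^{-1/2}/(2√π)` for every
constant `c`, so `x^q π(x)` is of exact order `x^{q-3/2}` there, integrable at `0⁺` iff `q > 1/2`.
Away from `0` the integrand is bounded because `𝓘(·,p)` is antitone (the kernel `e^{-x y²}`
decreases in `x`); antitonicity is read off the defining integral at a small `u` where it
converges, which holds since `𝓘(u,p) ≠ 0` there, `𝓘` blowing up at `0⁺`. -/

theorem Asymptotics.IsTheta.integrableAtFilter_iff {α E F : Type*} [MeasurableSpace α]
    [NormedAddCommGroup E] [NormedAddCommGroup F] {f : α → E} {g : α → F} {l : Filter α}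
    [IsMeasurablyGenerated l] {μ : Measure α} (h : f =Θ[l] g)
    (hf : StronglyMeasurableAtFilter f l μ) (hg : StronglyMeasurableAtFilter g l μ) :
    IntegrableAtFilter f l μ ↔ IntegrableAtFilter g l μ :=
  ⟨h.isBigO_symm.integrableAtFilter hg, h.isBigO.integrableAtFilter hf⟩

theorem integrableAtFilter_rpow_nhdsGT_zero_iff {s : ℝ} :
    IntegrableAtFilter (fun x : ℝ => x ^ s) (𝓝[>] 0) ↔ -1 < s := by
  refine ⟨fun ⟨t, ht, hint⟩ => ?_, fun h =>
    ⟨Ioo 0 1, Ioo_mem_nhdsGT one_pos, (intervalIntegral.integrableOn_Ioo_rpow_iff one_pos).2 h⟩⟩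
  obtain ⟨c, hc, hsub⟩ := mem_nhdsGT_iff_exists_Ioo_subset.1 ht
  exact (intervalIntegral.integrableOn_Ioo_rpow_iff hc).1 (hint.mono_set hsub)

theorem integrableOn_Ioo_iff_integrableAtFilter_nhdsGT {E : Type*} [NormedAddCommGroup E]
    {μ : Measure ℝ} {f : ℝ → E} {a b : ℝ} (hab : a < b)
    (hf : ∀ c, a < c → IntegrableOn f (Ico c b) μ) :
    IntegrableOn f (Ioo a b) μ ↔ IntegrableAtFilter f (𝓝[>] a) μ := by
  refine ⟨fun h => ⟨_, Ioo_mem_nhdsGT hab, h⟩, fun ⟨s, hs, hint⟩ => ?_⟩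
  obtain ⟨c, hac, hsub⟩ := mem_nhdsGT_iff_exists_Ioo_subset.1 hs
  exact ((hint.mono_set hsub).union (hf c hac)).mono_set Ioo_subset_Ioo_union_Ico

theorem Measurable.integral_prod_right {α β : Type*} [MeasurableSpace α] [MeasurableSpace β]
    {ν : Measure β} [SFinite ν] {f : α → β → ℝ} (hf : Measurable (Function.uncurry f)) :
    Measurable fun x => ∫ y, f x y ∂ν :=
  (hf.stronglyMeasurable.integral_prod_right (ν := ν)).measurable

lemma measurable_besselJ (ν : ℝ) : Measurable (besselJ ν) := by
  unfold besselJ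
  refine (Measurable.div_const ?_ _).sub (measurable_const.mul ?_) <;>
    exact Measurable.integral_prod_right (by fun_prop)

lemma measurable_besselY (ν : ℝ) : Measurable (besselY ν) := by
  unfold besselY
  refine (Measurable.div_const ?_ _).sub (Measurable.div_const ?_ _) <;>
    exact Measurable.integral_prod_right (by fun_prop)

@[fun_prop]
lemma measurable_hankelNormSq (ν : ℝ) : Measurable (hankelNormSq ν) :=
  ((measurable_besselJ ν).pow_const 2).add ((measurable_besselY ν).pow_const 2)

@[fun_prop]
lemma measurable_jaeger (p : ℝ) : Measurable fun x => jaeger x p :=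
  measurable_const.mul (Measurable.integral_prod_right (by fun_prop))

lemma hankelNormSq_nonneg (ν y : ℝ) : 0 ≤ hankelNormSq ν y := by
  unfold hankelNormSq; positivity

lemma jaeger_nonneg (x p : ℝ) : 0 ≤ jaeger x p :=
  mul_nonneg (by positivity) <| setIntegral_nonneg measurableSet_Ioi fun y (hy : 0 < y) =>
    div_nonneg (exp_nonneg _) (mul_nonneg hy.le (hankelNormSq_nonneg p y))

/-- `jaeger x₀ p ≠ 0` stands in for integrability of the integrand at `x₀`: a divergent Bochner
integral has the junk value `0`. -/
lemma jaeger_le_of_le {p x₀ x : ℝ} (hx : x₀ ≤ x) (h : jaeger x₀ p ≠ 0) :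
    jaeger x p ≤ jaeger x₀ p := by
  set k : ℝ → ℝ → ℝ := fun x y => Real.exp (-x * y ^ 2) / (y * hankelNormSq p y)
  have hk_nonneg : ∀ y ∈ Ioi (0 : ℝ), 0 ≤ k x y := fun y (hy : 0 < y) =>
    div_nonneg (exp_nonneg _) (mul_nonneg hy.le (hankelNormSq_nonneg p y))
  have hk_anti : ∀ y ∈ Ioi (0 : ℝ), k x y ≤ k x₀ y := fun y (hy : 0 < y) =>
    div_le_div_of_nonneg_right
      (exp_le_exp.2 (mul_le_mul_of_nonneg_right (neg_le_neg hx) (sq_nonneg y)))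
      (mul_nonneg hy.le (hankelNormSq_nonneg p y))
  have hint₀ : IntegrableOn (k x₀) (Ioi 0) := by
    by_contra hc
    exact h (by rw [jaeger, integral_undef hc, mul_zero])
  have hint : IntegrableOn (k x) (Ioi 0) :=
    hint₀.mono' (by fun_prop : Measurable (k x)).aestronglyMeasurable <|
      ae_restrict_of_forall_mem measurableSet_Ioi fun y hy => by
        rw [norm_of_nonneg (hk_nonneg y hy)]
        exact hk_anti y hy
  exact mul_le_mul_of_nonneg_left (setIntegral_mono_on hint hint₀ measurableSet_Ioi hk_anti)
    (by positivity)

lemma bddAbove_jaeger_image_Ici {p : ℝ} (hJ : Tendsto (fun x => jaeger x p) (𝓝[>] 0) atTop)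
    {ε : ℝ} (hε : 0 < ε) : BddAbove ((fun x => jaeger x p) '' Ici ε) := by
  obtain ⟨u, hu_pos, hu_lt⟩ := ((hJ.eventually_gt_atTop 0).and (Ioo_mem_nhdsGT hε)).exists
  refine ⟨jaeger u p, forall_mem_image.2 fun x hx => ?_⟩
  exact jaeger_le_of_le (hu_lt.2.le.trans hx) hu_pos.ne'

def JaegerSmallArgExpansion (p : ℝ) : Prop :=
  (fun x : ℝ => jaeger x p - (1 / (2 * Real.sqrt (Real.pi * x)) + (1 - 2 * p) / 4))
    =O[𝓝[>] (0:ℝ)] fun x : ℝ => Real.sqrt x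

theorem jaeger_add_const_isEquivalent {p : ℝ} (h0 : JaegerSmallArgExpansion p) (m : ℝ) :
    (fun x => jaeger x p + m) ~[𝓝[>] 0] fun x => (2 * √π)⁻¹ * x ^ (-(1 / 2) : ℝ) := by
  set v : ℝ → ℝ := fun x => (2 * √π)⁻¹ * x ^ (-(1 / 2) : ℝ)
  have hc : (2 * √π)⁻¹ ≠ 0 := by positivity
  have hv : Tendsto v (𝓝[>] 0) atTop :=
    (tendsto_rpow_neg_nhdsGT_zero (by norm_num)).const_mul_atTop (by positivity)
  have hv_eq : ∀ᶠ x in 𝓝[>] (0 : ℝ), 1 / (2 * √(π * x)) = v x := by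
    filter_upwards [self_mem_nhdsWithin] with x (hx : 0 < x)
    simp only [v]
    rw [Real.sqrt_mul pi_pos.le, Real.sqrt_eq_rpow x, Real.rpow_neg hx.le]
    field_simp
  have hsqrt : (fun x : ℝ => √x) =o[𝓝[>] 0] v := by
    have hx : (fun x : ℝ => x) =o[𝓝[>] 0] fun _ => (1 : ℝ) :=
      (isLittleO_one_iff ℝ).2 (tendsto_nhdsWithin_of_tendsto_nhds tendsto_id)
    have hrpow : (fun x : ℝ => x ^ (-(1 / 2) : ℝ)) =O[𝓝[>] 0] v :=
      ((isTheta_const_mul_left hc).2 isTheta_rfl).isBigO_symm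
    refine (hx.mul_isBigO hrpow).congr' ?_ (.of_eq (by simp only [one_mul]))
    filter_upwards [self_mem_nhdsWithin] with x (hx : 0 < x)
    rw [Real.sqrt_eq_rpow, ← Real.rpow_one_add' hx.le (by norm_num)]
    norm_num
  have hconst : (fun _ : ℝ => (1 - 2 * p) / 4 + m) =o[𝓝[>] 0] v :=
    isLittleO_const_left.2 (Or.inr (tendsto_norm_atTop_atTop.comp hv))
  refine ((h0.trans_isLittleO hsqrt).add hconst).congr' ?_ EventuallyEq.rfl
  filter_upwards [hv_eq] with x hx
  simp only [Pi.sub_apply, ← hx]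
  ring

theorem tendsto_jaeger_nhdsGT_zero {p : ℝ} (h0 : JaegerSmallArgExpansion p) :
    Tendsto (fun x => jaeger x p) (𝓝[>] 0) atTop := by
  simpa using (jaeger_add_const_isEquivalent h0 0).symm.tendsto_atTop
    ((tendsto_rpow_neg_nhdsGT_zero (by norm_num)).const_mul_atTop (by positivity))

noncomputable def gigLevyDensity (a b p x : ℝ) : ℝ :=
  Real.exp (-a * x / 2) / x * (jaeger (x / (2 * b)) p + max p 0)

section gigLevyDensity

variable {a b p : ℝ}

lemma measurable_gigLevyDensity : Measurable (gigLevyDensity a b p) := by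
  unfold gigLevyDensity
  fun_prop

lemma integrableOn_rpow_mul_gigLevyDensity_Icc (hb : 0 < b)
    (hJ : Tendsto (fun x => jaeger x p) (𝓝[>] 0) atTop) (q : ℝ) {ε : ℝ} (hε : 0 < ε) (M : ℝ) :
    IntegrableOn (fun x => x ^ q * gigLevyDensity a b p x) (Icc ε M) := by
  obtain ⟨C, hC⟩ := bddAbove_jaeger_image_Ici hJ (div_pos hε (by positivity : (0 : ℝ) < 2 * b))
  have hfactor : IntegrableOn (fun x => jaeger (x / (2 * b)) p + max p 0) (Icc ε M) := by
    refine Measure.integrableOn_of_bounded (M := C + max p 0) measure_Icc_lt_top.ne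
      (by fun_prop : Measurable fun x => jaeger (x / (2 * b)) p + max p 0).aestronglyMeasurable ?_
    refine ae_restrict_of_forall_mem measurableSet_Icc fun x hx => ?_
    rw [norm_of_nonneg (add_nonneg (jaeger_nonneg _ _) (le_max_right p 0))]
    gcongr
    exact hC (mem_image_of_mem _ (div_le_div_of_nonneg_right hx.1 (by positivity)))
  have hcont : ContinuousOn (fun x => x ^ q * (Real.exp (-a * x / 2) / x)) (Icc ε M) := by
    have : ∀ x ∈ Icc ε M, x ≠ 0 := fun x hx => (hε.trans_le hx.1).ne'
    fun_prop (disch := assumption)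
  simpa only [gigLevyDensity, mul_assoc] using hfactor.continuousOn_mul hcont isCompact_Icc

theorem rpow_mul_gigLevyDensity_isTheta (hb : 0 < b)
    (h0 : JaegerSmallArgExpansion p) (q : ℝ) :
    (fun x => x ^ q * gigLevyDensity a b p x) =Θ[𝓝[>] 0] fun x => x ^ (q - 3 / 2) := by
  have hexp : (fun x => Real.exp (-a * x / 2)) =Θ[𝓝[>] 0] fun _ => (1 : ℝ) := by
    refine ((isEquivalent_const_iff_tendsto one_ne_zero).2 ?_).isTheta
    simpa using (((by fun_prop : Continuous fun x : ℝ => Real.exp (-a * x / 2))).tendsto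
      0).mono_left nhdsWithin_le_nhds
  have hscale : Tendsto (fun x => x / (2 * b)) (𝓝[>] 0) (𝓝[>] 0) := by
    refine tendsto_nhdsWithin_of_tendsto_nhds_of_eventually_within _ ?_ ?_
    · simpa using ((continuous_id.div_const (2 * b)).tendsto 0).mono_left nhdsWithin_le_nhds
    · filter_upwards [self_mem_nhdsWithin] with x (hx : 0 < x)
      exact div_pos hx (by positivity)
  have hfactor : (fun x => jaeger (x / (2 * b)) p + max p 0)
      =Θ[𝓝[>] 0] fun x => x ^ (-(1 / 2) : ℝ) := by
    refine ((jaeger_add_const_isEquivalent h0 (max p 0)).comp_tendsto hscale).isTheta.trans ?_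
    have hc : (2 * √π)⁻¹ / (2 * b) ^ (-(1 / 2) : ℝ) ≠ 0 := by positivity
    refine EventuallyEq.trans_isTheta ?_ ((isTheta_const_mul_left hc).2 isTheta_rfl)
    filter_upwards [self_mem_nhdsWithin] with x (hx : 0 < x)
    simp only [Function.comp_apply]
    rw [Real.div_rpow hx.le (by positivity)]
    ring
  refine EventuallyEq.trans_isTheta (.of_eq ?_) (((isTheta_refl (fun x : ℝ => x ^ q) _).mul
    ((hexp.mul (isTheta_refl (fun x : ℝ => x⁻¹) _)).mul hfactor)).trans_eventuallyEq ?_)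
  · ext x; simp only [gigLevyDensity, div_eq_mul_inv]
  · filter_upwards [self_mem_nhdsWithin] with x (hx : 0 < x)
    rw [one_mul, ← Real.rpow_neg_one, ← Real.rpow_add hx, ← Real.rpow_add hx]
    ring_nf

theorem integrableOn_rpow_mul_gigLevyDensity_iff (hb : 0 < b)
    (h0 : JaegerSmallArgExpansion p) (q : ℝ) :
    IntegrableOn (fun x => x ^ q * gigLevyDensity a b p x) (Ioo 0 1) ↔ 1 / 2 < q := by
  have hmeas {f : ℝ → ℝ} (hf : Measurable f) : StronglyMeasurableAtFilter f (𝓝[>] 0) :=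
    hf.stronglyMeasurable.stronglyMeasurableAtFilter
  rw [integrableOn_Ioo_iff_integrableAtFilter_nhdsGT zero_lt_one fun c hc =>
      (integrableOn_rpow_mul_gigLevyDensity_Icc hb (tendsto_jaeger_nhdsGT_zero h0) q hc 1).mono_set
        Ico_subset_Icc_self,
    (rpow_mul_gigLevyDensity_isTheta hb h0 q).integrableAtFilter_iff
      (hmeas ((measurable_id.pow_const q).mul measurable_gigLevyDensity))
      (hmeas (measurable_id.pow_const _)),
    integrableAtFilter_rpow_nhdsGT_zero_iff]
  constructor <;> intro h <;> linarith

end gigLevyDensity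

theorem gig_blumenthal_getoor_general (a b p : ℝ) (hb : 0 < b)
    (h0 : (fun x : ℝ => jaeger x p - (1 / (2 * Real.sqrt (Real.pi * x)) + (1 - 2 * p) / 4))
        =O[𝓝[>] (0:ℝ)] fun x : ℝ => Real.sqrt x) :
    (∀ q : ℝ, 0 < q →
      (MeasureTheory.IntegrableOn
          (fun x : ℝ => x ^ q * (Real.exp (-a * x / 2) / x
            * (jaeger (x / (2 * b)) p + max p 0))) (Set.Ioo 0 1)
        ↔ 1 / 2 < q)) ∧
    sInf {q : ℝ | 0 < q ∧ MeasureTheory.IntegrableOn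
        (fun x : ℝ => x ^ q * (Real.exp (-a * x / 2) / x
          * (jaeger (x / (2 * b)) p + max p 0))) (Set.Ioo 0 1)} = 1 / 2 := by
  have key := integrableOn_rpow_mul_gigLevyDensity_iff (a := a) hb h0
  refine ⟨fun q _ => key q, ?_⟩
  have hS : {q : ℝ | 0 < q ∧ IntegrableOn (fun x => x ^ q * gigLevyDensity a b p x) (Ioo 0 1)}
      = Ioi (1 / 2) := by
    ext q
    simp only [key, mem_ofPred_eq, mem_Ioi, and_iff_right_iff_imp]
    intro hq
    linarith
  exact hS ▸ csInf_Ioi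

/-- Integrability of `x^q` against the GIG Lévy measure near the origin holds iff
`q > 1/2`; consequently the Blumenthal–Getoor index of the GIG (and BGIG) Lévy
process equals `1/2`. -/
theorem gig_blumenthal_getoor (a b p : ℝ) (ha : 0 < a) (hb : 0 < b)
    (h0 : (fun x : ℝ => jaeger x p - (1 / (2 * Real.sqrt (Real.pi * x)) + (1 - 2 * p) / 4))
        =O[𝓝[>] (0:ℝ)] fun x : ℝ => Real.sqrt x) :
    (∀ q : ℝ, 0 < q →
      (MeasureTheory.IntegrableOn
          (fun x : ℝ => x ^ q * (Real.exp (-a * x / 2) / x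
            * (jaeger (x / (2 * b)) p + max p 0))) (Set.Ioo 0 1)
        ↔ 1 / 2 < q)) ∧
    sInf {q : ℝ | 0 < q ∧ MeasureTheory.IntegrableOn
        (fun x : ℝ => x ^ q * (Real.exp (-a * x / 2) / x
          * (jaeger (x / (2 * b)) p + max p 0))) (Set.Ioo 0 1)} = 1 / 2 :=
  gig_blumenthal_getoor_general a b p hb h0
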